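/- Suppose S = ⟨a₁,...,a_r⟩ with a₁ < F(S) < a₂. Then F(S⁽ⁿ⁾) < n·a₂ for every n ≥ 1, F(S⁽ⁿ⁺¹⁾) = F(S⁽ⁿ⁾) + a₁ for every n ≥ 1, and consequently S⁽ⁿ⁺¹⁾ \ {0} = (S⁽ⁿ⁾ \ {0}) + a₁ and |S⁽ⁿ⁾ \ S⁽ⁿ⁺¹⁾| = a₁ for all n ≥ 1; the regularity index equals 1. -/

import Mathlib

/-!
Every element of `S⁽ⁿ⁺¹⁾` either uses the smallest generator `a₁` (`a 0` below), and is then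
`a₁` plus an element of `S⁽ⁿ⁾`, or uses only generators `≥ a₂`, and is then at least `(n+1)·a₂`.
Because `F < a₂`, the second kind lies above `F + n·a₁`, so induction on `n` shows that
`F(S⁽ⁿ⁺¹⁾) = F + n·a₁` and `S⁽ⁿ⁺¹⁾ \ {0} = a₁ + (S⁽ⁿ⁾ \ {0})`. Hence `S⁽ⁿ⁾ \ S⁽ⁿ⁺¹⁾` is the
Apéry set of `S⁽ⁿ⁾ \ {0}` with respect to `a₁`, which has exactly one element per residue class
mod `a₁`.
-/

/-- `S⁽ⁿ⁾ = {0} ∪ {a·α : α ∈ ℕʳ, |α| ≥ n}`; in particular `S = S⁽¹⁾`. -/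
def Sn {r : ℕ} (a : Fin r → ℕ) (n : ℕ) : Set ℕ :=
  {0} ∪ {s | ∃ α : Fin r → ℕ, n ≤ ∑ i, α i ∧ s = ∑ i, a i * α i}

section

variable {r : ℕ}

@[simp]
lemma zero_mem_Sn (a : Fin r → ℕ) (n : ℕ) : 0 ∈ Sn a n := Or.inl rfl

lemma Sn_antitone (a : Fin r → ℕ) : Antitone (Sn a) := by
  rintro m n hmn s (rfl | ⟨α, hα, rfl⟩)
  · exact zero_mem_Sn a m
  · exact Or.inr ⟨α, hmn.trans hα, rfl⟩

lemma Sn_zero (a : Fin r → ℕ) : Sn a 0 = Sn a 1 := by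
  refine (Sn_antitone a zero_le_one).antisymm' ?_
  rintro s (rfl | ⟨α, -, rfl⟩)
  · exact zero_mem_Sn a 1
  rcases Nat.eq_zero_or_pos (∑ i, α i) with h | h
  · left
    simp [Finset.sum_eq_zero_iff.mp h]
  · exact Or.inr ⟨α, h, rfl⟩

lemma sum_add_single (α : Fin r → ℕ) (i : Fin r) :
    ∑ j, (α + Pi.single i 1 : Fin r → ℕ) j = ∑ j, α j + 1 := by
  simp [Finset.sum_add_distrib]

lemma sum_mul_add_single (a α : Fin r → ℕ) (i : Fin r) :
    ∑ j, a j * (α + Pi.single i 1 : Fin r → ℕ) j = ∑ j, a j * α j + a i := by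
  simp [Finset.sum_add_distrib, mul_add, Pi.single_apply]

lemma mul_sum_le_sum_mul {a α : Fin r → ℕ} {c : ℕ} (h : ∀ i, α i ≠ 0 → c ≤ a i) :
    c * ∑ i, α i ≤ ∑ i, a i * α i := by
  rw [Finset.mul_sum]
  refine Finset.sum_le_sum fun i _ => ?_
  rcases eq_or_ne (α i) 0 with h0 | h0
  · simp [h0]
  · exact Nat.mul_le_mul_right _ (h i h0)

lemma add_mem_Sn_succ {a : Fin r → ℕ} {n s : ℕ} (i : Fin r) (hs : s ∈ Sn a n) (hs0 : s ≠ 0) :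
    s + a i ∈ Sn a (n + 1) := by
  obtain rfl | ⟨α, hα, rfl⟩ := hs
  · exact absurd rfl hs0
  · exact Or.inr ⟨α + Pi.single i 1, by rw [sum_add_single]; omega,
      (sum_mul_add_single a α i).symm⟩

lemma eq_sub_add_single {α : Fin r → ℕ} {i : Fin r} (h : α i ≠ 0) :
    α = (α - Pi.single i 1) + Pi.single i 1 := by
  refine (tsub_add_cancel_of_le fun j => ?_).symm
  rcases eq_or_ne j i with rfl | hj
  · simpa [Nat.one_le_iff_ne_zero]
  · simp [hj]

lemma eq_zero_or_exists_add_or_le_of_mem_Sn_succ {a : Fin (r + 2) → ℕ} (ha : Monotone a)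
    {n s : ℕ} (hs : s ∈ Sn a (n + 1)) :
    s = 0 ∨ (∃ t ∈ Sn a n, n * a 0 ≤ t ∧ s = t + a 0) ∨ (n + 1) * a 1 ≤ s := by
  obtain rfl | ⟨α, hα, rfl⟩ := hs
  · exact Or.inl rfl
  right
  by_cases h0 : α 0 = 0
  · right
    calc (n + 1) * a 1 ≤ a 1 * ∑ i, α i := by rw [mul_comm]; exact Nat.mul_le_mul_left _ hα
      _ ≤ ∑ i, a i * α i := mul_sum_le_sum_mul fun i hi =>
          ha (Fin.one_le_of_ne_zero fun h => hi (h ▸ h0))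
  · left
    have hαγ := eq_sub_add_single h0
    set γ := α - Pi.single 0 1
    rw [hαγ, sum_add_single] at hα
    refine ⟨∑ i, a i * γ i, Or.inr ⟨γ, by omega, rfl⟩, ?_, by rw [hαγ, sum_mul_add_single]⟩
    calc n * a 0 ≤ a 0 * ∑ i, γ i := by rw [mul_comm]; exact Nat.mul_le_mul_left _ (by omega)
      _ ≤ ∑ i, a i * γ i := mul_sum_le_sum_mul fun i _ => ha (Fin.zero_le i)

lemma mem_Sn_succ_of_lt {a : Fin r → ℕ} {F : ℕ} (hF : F ∈ upperBounds {m | m ∉ Sn a 1})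
    (i : Fin r) : ∀ n m, F + n * a i < m → m ∈ Sn a (n + 1)
  | 0, m, hm => by_contra fun h => (hF h).not_gt (by simpa using hm)
  | n + 1, m, hm => by
    rw [add_one_mul, ← add_assoc] at hm
    obtain ⟨t, rfl⟩ : ∃ t, m = t + a i := ⟨m - a i, by omega⟩
    exact add_mem_Sn_succ i (mem_Sn_succ_of_lt hF i n t (by omega)) (by omega)

lemma notMem_Sn_succ {a : Fin (r + 2) → ℕ} (ha : Monotone a) (ha0 : 0 < a 0) {F : ℕ}
    (hF : F ∉ Sn a 1) (hFa : F < a 1) : ∀ n, F + n * a 0 ∉ Sn a (n + 1)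
  | 0 => by simpa using hF
  | n + 1 => fun hmem => by
    have ha01 : a 0 ≤ a 1 := ha (Fin.zero_le 1)
    rcases eq_zero_or_exists_add_or_le_of_mem_Sn_succ ha hmem with h | ⟨t, ht, -, hst⟩ | h
    · nlinarith
    · obtain rfl : t = F + n * a 0 := by rw [add_one_mul] at hst; omega
      exact notMem_Sn_succ ha ha0 hF hFa n ht
    · nlinarith

lemma isGreatest_notMem_Sn {a : Fin (r + 2) → ℕ} (ha : Monotone a) (ha0 : 0 < a 0) {F : ℕ}
    (hF : IsGreatest {m | m ∉ Sn a 1} F) (hFa : F < a 1) (n : ℕ) :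
    IsGreatest {m | m ∉ Sn a (n + 1)} (F + n * a 0) :=
  ⟨notMem_Sn_succ ha ha0 hF.1 hFa n,
    fun m hm => not_lt.mp fun h => hm (mem_Sn_succ_of_lt hF.2 0 n m h)⟩

lemma Sn_succ_diff_zero {a : Fin (r + 2) → ℕ} (ha : Monotone a) (ha0 : 0 < a 0) {F : ℕ}
    (hF : F ∈ upperBounds {m | m ∉ Sn a 1}) (hFa : F < a 1) {n : ℕ} (hn : 1 ≤ n) :
    Sn a (n + 1) \ {0} = (· + a 0) '' (Sn a n \ {0}) := by
  ext s
  simp only [Set.mem_sdiff, Set.mem_singleton_iff, Set.mem_image]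
  constructor
  · rintro ⟨hs, hs0⟩
    rcases eq_zero_or_exists_add_or_le_of_mem_Sn_succ ha hs with h | ⟨t, ht, htn, rfl⟩ | h
    · exact absurd h hs0
    · exact ⟨t, ⟨ht, by nlinarith⟩, rfl⟩
    · obtain ⟨k, rfl⟩ := Nat.exists_eq_add_of_le' hn
      have : F + (k + 1) * a 0 < s := by nlinarith [ha (Fin.zero_le 1)]
      rw [add_one_mul, ← add_assoc] at this
      exact ⟨s - a 0, ⟨mem_Sn_succ_of_lt hF 0 k _ (by omega), by omega⟩, by omega⟩
  · rintro ⟨t, ⟨ht, ht0⟩, rfl⟩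
    exact ⟨add_mem_Sn_succ 0 ht ht0, by omega⟩

lemma add_mul_mem_of_add_mem {T : Set ℕ} {d : ℕ} (hT : ∀ t ∈ T, t + d ∈ T) {t : ℕ}
    (ht : t ∈ T) : ∀ c, t + c * d ∈ T
  | 0 => by simpa using ht
  | c + 1 => by simpa [add_one_mul, ← add_assoc] using hT _ (add_mul_mem_of_add_mem hT ht c)

/-- Its elements are the least elements of `T` in the residue classes mod `d`. -/
lemma ncard_diff_image_add {T : Set ℕ} {d B : ℕ} (hd : 0 < d) (hT : ∀ t ∈ T, t + d ∈ T)
    (hB : ∀ m, B < m → m ∈ T) : (T \ (· + d) '' T).ncard = d := by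
  classical
  set D := T \ (· + d) '' T
  have hinj : Set.InjOn (· % d) D := by
    suffices ∀ s ∈ D, ∀ s' ∈ D, s ≤ s' → s % d = s' % d → s = s' by
      intro s hs s' hs' h
      rcases le_total s s' with hle | hle
      · exact this s hs s' hs' hle h
      · exact (this s' hs' s hs hle h.symm).symm
    intro s hs s' hs' hle h
    obtain ⟨c, hc⟩ := (Nat.modEq_iff_dvd' hle).mp h
    by_contra hne
    rcases c with _ | c
    · exact hne (by omega)
    refine hs'.2 ⟨s + c * d, add_mul_mem_of_add_mem hT hs.1 c, ?_⟩
    rw [mul_comm, add_one_mul] at hc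
    exact (show s' = s + c * d + d by omega).symm
  have himage : (· % d) '' D = Set.Iio d := by
    refine Set.Subset.antisymm (by rintro _ ⟨s, -, rfl⟩; exact Nat.mod_lt s hd) fun j hj => ?_
    have hex : ∃ m, m ∈ T ∧ m % d = j :=
      ⟨j + (B + 1) * d, hB _ (by nlinarith), by simp [Nat.mod_eq_of_lt (show j < d from hj)]⟩
    refine ⟨Nat.find hex, ⟨(Nat.find_spec hex).1, ?_⟩, (Nat.find_spec hex).2⟩
    rintro ⟨t, ht, hteq⟩
    refine Nat.find_min hex (m := t) (by simp only at hteq; omega) ⟨ht, ?_⟩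
    simpa [← hteq, Nat.add_mod_right] using (Nat.find_spec hex).2
  rw [← hinj.ncard_image, himage, Set.ncard_Iio_nat]

lemma ncard_Sn_diff_Sn_succ {a : Fin (r + 2) → ℕ} (ha : Monotone a) (ha0 : 0 < a 0) {F : ℕ}
    (hF : F ∈ upperBounds {m | m ∉ Sn a 1}) (hFa : F < a 1) {n : ℕ} (hn : 1 ≤ n) :
    (Sn a n \ Sn a (n + 1)).ncard = a 0 := by
  obtain ⟨k, rfl⟩ := Nat.exists_eq_add_of_le' hn
  have hdiff : Sn a (k + 1) \ Sn a (k + 1 + 1) =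
      (Sn a (k + 1) \ {0}) \ (· + a 0) '' (Sn a (k + 1) \ {0}) := by
    rw [← Sn_succ_diff_zero ha ha0 hF hFa hn]
    ext s
    by_cases hs : s = 0 <;> simp [hs]
  rw [hdiff]
  refine ncard_diff_image_add ha0 (fun t ht => ⟨?_, ?_⟩) (B := F + k * a 0) fun m hm => ⟨?_, ?_⟩
  · exact Sn_antitone a (Nat.le_succ _) (add_mem_Sn_succ 0 ht.1 ht.2)
  · simp only [Set.mem_singleton_iff]; omega
  · exact mem_Sn_succ_of_lt hF 0 k m hm
  · simp only [Set.mem_singleton_iff]; omega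

end

theorem stmt_15_general (r : ℕ) (a : Fin (r + 2) → ℕ)
    (ha : StrictMono a) (h1 : 1 < a 0)
    (F : ℕ) (hF : IsGreatest {m : ℕ | m ∉ Sn a 1} F)
    (hF2 : F < a 1) :
    (∀ n : ℕ, 1 ≤ n → ∃ Fn : ℕ,
      IsGreatest {m : ℕ | m ∉ Sn a n} Fn ∧ Fn < n * a 1 ∧
      IsGreatest {m : ℕ | m ∉ Sn a (n + 1)} (Fn + a 0)) ∧
    (∀ n : ℕ, 1 ≤ n →
      Sn a (n + 1) \ {0} = (fun s => s + a 0) '' (Sn a n \ {0})) ∧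
    (∀ n : ℕ, 1 ≤ n → (Sn a n \ Sn a (n + 1)).ncard = a 0) ∧
    IsLeast {k : ℕ | ∀ n : ℕ, k ≤ n →
      (Sn a n \ Sn a (n + 1)).ncard = a 0} 1 := by
  have hmono := ha.monotone
  have ha0 : 0 < a 0 := by omega
  have hcard n (hn : 1 ≤ n) := ncard_Sn_diff_Sn_succ hmono ha0 hF.2 hF2 hn
  refine ⟨fun n hn => ?_, fun n hn => Sn_succ_diff_zero hmono ha0 hF.2 hF2 hn, hcard,
    hcard, fun k hk => Nat.one_le_iff_ne_zero.mpr ?_⟩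
  · obtain ⟨k, rfl⟩ := Nat.exists_eq_add_of_le' hn
    refine ⟨F + k * a 0, isGreatest_notMem_Sn hmono ha0 hF hF2 k, ?_, ?_⟩
    · nlinarith [hmono (Fin.zero_le 1)]
    · simpa [add_one_mul, add_assoc] using isGreatest_notMem_Sn hmono ha0 hF hF2 (k + 1)
  · rintro rfl
    have := hk 0 le_rfl
    rw [Sn_zero, Set.sdiff_self, Set.ncard_empty] at this
    omega

theorem stmt_15 (r : ℕ) (a : Fin (r + 2) → ℕ)
    (ha : StrictMono a) (h1 : 1 < a 0)
    (hgcd : Finset.univ.gcd a = 1)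
    (hmin : ∀ i, a i ∉ AddSubmonoid.closure (a '' {i}ᶜ))
    (F : ℕ) (hF : IsGreatest {m : ℕ | m ∉ Sn a 1} F)
    (hF1 : a 0 < F) (hF2 : F < a 1) :
    (∀ n : ℕ, 1 ≤ n → ∃ Fn : ℕ,
      IsGreatest {m : ℕ | m ∉ Sn a n} Fn ∧ Fn < n * a 1 ∧
      IsGreatest {m : ℕ | m ∉ Sn a (n + 1)} (Fn + a 0)) ∧
    (∀ n : ℕ, 1 ≤ n →
      Sn a (n + 1) \ {0} = (fun s => s + a 0) '' (Sn a n \ {0})) ∧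
    (∀ n : ℕ, 1 ≤ n → (Sn a n \ Sn a (n + 1)).ncard = a 0) ∧
    IsLeast {k : ℕ | ∀ n : ℕ, k ≤ n →
      (Sn a n \ Sn a (n + 1)).ncard = a 0} 1 :=
  stmt_15_general r a ha h1 F hF hF2
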